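/- arXiv:0805.3688 — 6 statements merged into one kernel-verified Lean document; each statement's English description precedes it below -/
import Mathlib

section
/- Bipolar theorem: For n ≥ 1 and a subset W ⊆ (ℝmax^n)^2, W is the polar of a cone (i.e., there exists V ⊆ ℝmax^n with W = V°) if, and only if, the following three conditions hold: (i) W is a topologically closed subsemimodule of (ℝmax^n)^2; (ii) for all f, g ∈ ℝmax^n, f ≤ g implies (f,g) ∈ W; (iii) (f,g) ∈ W and (g,h) ∈ W imply (f,h) ∈ W. -/
open scoped Classical

noncomputable section

/-- The max-plus semiring `ℝmax = ℝ ∪ {-∞}`. Its `Add` is the max-plus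
"multiplication" `a ⊗ b = a + b` (with `-∞` absorbing), its `max` is the
max-plus "addition". -/
abbrev Rmax := WithBot ℝ

/-- The order topology on `WithBot ℝ` (the topology of the metric
`d(a,b) = |exp a - exp b|`). -/
instance : TopologicalSpace Rmax := Preorder.topology Rmax
instance : OrderTopology Rmax := ⟨rfl⟩

/-- Vectors of the max-plus semimodule `ℝmax^n`. -/
abbrev RmaxVec (n : ℕ) := Fin n → Rmax

/-- The max-plus linear combination `xλ ⊕ yμ`. -/
def maxComb {n : ℕ} (x y : RmaxVec n) (lam mu : Rmax) : RmaxVec n :=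
  fun i => max (x i + lam) (y i + mu)

/-- `V ⊆ ℝmax^n` is a (max-plus) subsemimodule. -/
def IsSubsemimodule {n : ℕ} (V : Set (RmaxVec n)) : Prop :=
  ∀ x ∈ V, ∀ y ∈ V, ∀ lam mu : Rmax, maxComb x y lam mu ∈ V

/-- `W ⊆ (ℝmax^n)² ≅ ℝmax^{2n}` is a (max-plus) subsemimodule,
with the entrywise operations. -/
def IsSubsemimodulePair {n : ℕ} (W : Set (RmaxVec n × RmaxVec n)) : Prop :=
  ∀ p ∈ W, ∀ q ∈ W, ∀ lam mu : Rmax,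
    (maxComb p.1 q.1 lam mu, maxComb p.2 q.2 lam mu) ∈ W

/-- A pre-congruence: a subsemimodule of `(ℝmax^n)²` containing the diagonal
and transitive. -/
def IsPrecongruence {n : ℕ} (W : Set (RmaxVec n × RmaxVec n)) : Prop :=
  IsSubsemimodulePair W ∧ (∀ f : RmaxVec n, (f, f) ∈ W) ∧
    ∀ f g h : RmaxVec n, (f, g) ∈ W → (g, h) ∈ W → (f, h) ∈ W

/-- A polar cone: a pre-congruence such that `f ≤ g` implies `(f,g) ∈ W`. -/
def IsPolarCone {n : ℕ} (W : Set (RmaxVec n × RmaxVec n)) : Prop :=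
  IsPrecongruence W ∧ ∀ f g : RmaxVec n, f ≤ g → (f, g) ∈ W

/-- A congruence: a symmetric pre-congruence. -/
def IsCongruence {n : ℕ} (W : Set (RmaxVec n × RmaxVec n)) : Prop :=
  IsPrecongruence W ∧ ∀ f g : RmaxVec n, (f, g) ∈ W → (g, f) ∈ W

/-- The max-plus bracket `⟨y, x⟩ = max_i (y_i + x_i)`. -/
def mpBracket {n : ℕ} (y x : RmaxVec n) : Rmax :=
  Finset.univ.sup fun i => y i + x i

/-- The polar `V°` of `V ⊆ ℝmax^n`. -/
def mpPolar {n : ℕ} (V : Set (RmaxVec n)) : Set (RmaxVec n × RmaxVec n) :=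
  { p | ∀ x ∈ V, mpBracket p.1 x ≤ mpBracket p.2 x }

/-- The orthogonal `V⊥` of `V ⊆ ℝmax^n`. -/
def mpOrtho {n : ℕ} (V : Set (RmaxVec n)) : Set (RmaxVec n × RmaxVec n) :=
  { p | ∀ x ∈ V, mpBracket p.1 x = mpBracket p.2 x }

/-- The dual polar `W⋄` of `W ⊆ (ℝmax^n)²`. -/
def mpDiamond {n : ℕ} (W : Set (RmaxVec n × RmaxVec n)) : Set (RmaxVec n) :=
  { x | ∀ p ∈ W, mpBracket p.1 x ≤ mpBracket p.2 x }

/-- The dual orthogonal `W⊤` of `W ⊆ (ℝmax^n)²`. -/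
def mpTop {n : ℕ} (W : Set (RmaxVec n × RmaxVec n)) : Set (RmaxVec n) :=
  { x | ∀ p ∈ W, mpBracket p.1 x = mpBracket p.2 x }

/-!
For a closed polar cone `W` and a vector `g` with finite entries, the lower set
`{f | (f, g) ∈ W}` is cut out by its traces on the coordinate axes: on the coordinates `j`
where `{r | (r eⱼ, g) ∈ W}` is bounded it is `f j ≤ σⱼ`, with `σⱼ` the supremum (attained by
closedness), and there is no constraint on the other coordinates. Hence, for `x := -σ`
(and `-∞` off the bounded coordinates), `⟨f, x⟩ ≤ c ↔ (f, g + c) ∈ W` for every real `c`.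
Transitivity then puts `x` in `W⋄`, and `x` separates any pair `(f, g) ∉ W` from `W`. A general
`g` is first replaced by `g ⊕ s` for `s` small enough, which keeps `(f, g ⊕ s) ∉ W` by closedness.
-/

open Filter Topology Function

namespace Rmax

theorem tendsto_coe_atBot : Tendsto ((↑) : ℝ → Rmax) atBot (𝓝 ⊥) := by
  rw [WithBot.tendsto_nhds_bot_iff]
  intro r
  filter_upwards [eventually_lt_atBot r] with s hs
  exact WithBot.coe_lt_coe.2 hs

theorem add_coe_le_coe_iff (a : Rmax) (r s : ℝ) : a + r ≤ s ↔ a ≤ ((s - r : ℝ) : Rmax) := by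
  induction a using WithBot.recBotCoe with
  | bot => simp
  | coe a =>
    norm_cast
    exact le_sub_iff_add_le.symm

theorem add_coe_add_neg (a : Rmax) (c : ℝ) : a + c + ((-c : ℝ) : Rmax) = a := by
  rw [add_assoc, ← WithBot.coe_add, add_neg_cancel, WithBot.coe_zero, add_zero]

theorem continuous_add_const (c : Rmax) : Continuous (· + c) := by
  induction c using WithBot.recBotCoe with
  | bot => simpa only [WithBot.add_bot] using continuous_const
  | coe r =>
    refine Monotone.continuous_of_surjective (fun a b h => add_le_add_left h _) fun b => ?_
    exact ⟨b + ((-r : ℝ) : Rmax), by simpa using add_coe_add_neg b (-r)⟩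

end Rmax

section MaxPlusVectors

variable {n : ℕ}

theorem maxComb_zero_zero (x y : RmaxVec n) : maxComb x y 0 0 = x ⊔ y := by
  funext i
  simp [maxComb]

theorem maxComb_bot_right (x y : RmaxVec n) (c : Rmax) :
    maxComb x y c ⊥ = fun i => x i + c := by
  funext i
  simp [maxComb]

theorem le_mpBracket (y x : RmaxVec n) (i : Fin n) : y i + x i ≤ mpBracket y x :=
  Finset.le_sup (f := fun i => y i + x i) (Finset.mem_univ i)

theorem mpBracket_le_iff {y x : RmaxVec n} {c : Rmax} :
    mpBracket y x ≤ c ↔ ∀ i, y i + x i ≤ c := by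
  simp [mpBracket]

theorem mpBracket_mono_left (x : RmaxVec n) : Monotone fun y => mpBracket y x :=
  fun _ _ h => mpBracket_le_iff.2 fun i => (add_le_add_left (h i) _).trans (le_mpBracket _ x i)

theorem mpBracket_maxComb (y z x : RmaxVec n) (lam mu : Rmax) :
    mpBracket (maxComb y z lam mu) x = max (mpBracket y x + lam) (mpBracket z x + mu) := by
  have add_sup (v : RmaxVec n) (c : Rmax) :
      mpBracket v x + c = Finset.univ.sup fun i => v i + x i + c :=
    Finset.apply_sup_eq_sup_comp (· + c) (fun a b => (max_add_add_right a b c).symm)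
      (WithBot.bot_add c)
  rw [add_sup, add_sup, ← Finset.sup_sup]
  refine Finset.sup_congr rfl fun i _ => ?_
  simp only [maxComb, Pi.sup_apply, ← max_add_add_right, add_right_comm]

theorem continuous_mpBracket_left (x : RmaxVec n) :
    Continuous fun y : RmaxVec n => mpBracket y x :=
  Continuous.finset_sup_apply fun i _ =>
    (Rmax.continuous_add_const (x i)).comp (continuous_apply i)

theorem isPolarCone_mpPolar (V : Set (RmaxVec n)) : IsPolarCone (mpPolar V) := by
  refine ⟨⟨fun p hp q hq lam mu x hx => ?_, fun f x _ => le_rfl,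
    fun f g h hfg hgh x hx => (hfg x hx).trans (hgh x hx)⟩,
    fun f g hfg x _ => mpBracket_mono_left x hfg⟩
  rw [mpBracket_maxComb, mpBracket_maxComb]
  exact max_le_max (add_le_add_left (hp x hx) lam) (add_le_add_left (hq x hx) mu)

theorem isClosed_mpPolar (V : Set (RmaxVec n)) : IsClosed (mpPolar V) := by
  simp only [mpPolar, Set.ofPred_forall]
  exact isClosed_biInter fun x _ => isClosed_le
    ((continuous_mpBracket_left x).comp continuous_fst)
    ((continuous_mpBracket_left x).comp continuous_snd)

end MaxPlusVectors

namespace IsPolarCone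

variable {n : ℕ} {W : Set (RmaxVec n × RmaxVec n)} (hW : IsPolarCone W)
include hW

theorem mem_of_le {f g : RmaxVec n} (h : f ≤ g) : (f, g) ∈ W := hW.2 f g h

theorem trans {f g h : RmaxVec n} (hfg : (f, g) ∈ W) (hgh : (g, h) ∈ W) : (f, h) ∈ W :=
  hW.1.2.2 f g h hfg hgh

theorem mem_of_le_of_mem {f f' g : RmaxVec n} (h : f' ≤ f) (hf : (f, g) ∈ W) : (f', g) ∈ W :=
  hW.trans (hW.mem_of_le h) hf

theorem sup_mem {a b c d : RmaxVec n} (hab : (a, b) ∈ W) (hcd : (c, d) ∈ W) :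
    (a ⊔ c, b ⊔ d) ∈ W := by
  have h := hW.1.1 (a, b) hab (c, d) hcd 0 0
  rwa [maxComb_zero_zero, maxComb_zero_zero] at h

theorem add_const_mem {a b : RmaxVec n} (h : (a, b) ∈ W) (c : Rmax) :
    (fun i => a i + c, fun i => b i + c) ∈ W := by
  have h' := hW.1.1 (a, b) h (a, b) h c ⊥
  rwa [maxComb_bot_right, maxComb_bot_right] at h'

theorem add_coe_mem_iff {a b : RmaxVec n} (c : ℝ) :
    (fun i => a i + c, fun i => b i + c) ∈ W ↔ (a, b) ∈ W := by
  refine ⟨fun h => ?_, fun h => hW.add_const_mem h c⟩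
  simpa only [Rmax.add_coe_add_neg] using hW.add_const_mem h ((-c : ℝ) : Rmax)

theorem finset_sup_mem {ι : Type*} (s : Finset ι) {u : ι → RmaxVec n} {g : RmaxVec n}
    (h : ∀ i ∈ s, (u i, g) ∈ W) : (s.sup u, g) ∈ W := by
  induction s using Finset.cons_induction with
  | empty => exact hW.mem_of_le bot_le
  | cons j s hj ih =>
    rw [Finset.sup_cons, ← sup_idem g]
    exact hW.sup_mem (h j (s.mem_cons_self j)) (ih fun i hi => h i (Finset.mem_cons_of_mem hi))

theorem mem_of_forall_update_mem {f g : RmaxVec n} (h : ∀ i, (update ⊥ i (f i), g) ∈ W) :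
    (f, g) ∈ W := by
  have hf : f = Finset.univ.sup fun i => update ⊥ i (f i) := by
    refine le_antisymm (fun i => ?_) (Finset.sup_le fun i _ => by simp [update_le_iff])
    simpa using Finset.le_sup (f := fun j => update (⊥ : RmaxVec n) j (f j) i)
      (Finset.mem_univ i)
  rw [hf]
  exact hW.finset_sup_mem _ fun i _ => h i

theorem update_mem_of_forall_coe {g : RmaxVec n} {i : Fin n}
    (h : ∀ r : ℝ, (update ⊥ i (r : Rmax), g) ∈ W) (a : Rmax) : (update ⊥ i a, g) ∈ W := by
  induction a using WithBot.recBotCoe with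
  | bot => exact hW.mem_of_le (by simp [update_le_iff])
  | coe r => exact h r

end IsPolarCone

section Separation

variable {n : ℕ} (W : Set (RmaxVec n × RmaxVec n)) (g : RmaxVec n)

def coordSet (j : Fin n) : Set ℝ := {r | (update ⊥ j (r : Rmax), g) ∈ W}

def boundedCoords : Finset (Fin n) := Finset.univ.filter fun j => coordSet W g j ≠ Set.univ

def coordSup (j : Fin n) : ℝ := sSup (coordSet W g j)

def polarWitness : RmaxVec n :=
  fun j => if j ∈ boundedCoords W g then ((-coordSup W g j : ℝ) : Rmax) else ⊥

variable {W g}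

theorem isClosed_coordSet (hcl : IsClosed W) (j : Fin n) : IsClosed (coordSet W g j) :=
  hcl.preimage ((continuous_const.update j WithBot.continuous_coe).prodMk continuous_const)

theorem exists_notMem_sup_coe (hcl : IsClosed W) {f : RmaxVec n} (h : (f, g) ∉ W) :
    ∃ s : ℝ, (f, fun i => max (g i) (s : Rmax)) ∉ W := by
  by_contra! hall
  have hcont : Continuous fun c : Rmax => (f, fun i => max (g i) c) :=
    continuous_const.prodMk (continuous_pi fun i => continuous_const.max continuous_id)
  have hlim := hcl.mem_of_tendsto ((hcont.tendsto ⊥).comp Rmax.tendsto_coe_atBot)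
    (Eventually.of_forall hall)
  simp only [max_bot_right] at hlim
  exact h hlim

variable (hW : IsPolarCone W)
include hW

theorem coordSet_bddAbove {j : Fin n} (hj : j ∈ boundedCoords W g) :
    BddAbove (coordSet W g j) := by
  obtain ⟨r₀, hr₀⟩ := (Set.ne_univ_iff_exists_notMem _).1 (Finset.mem_filter.1 hj).2
  refine ⟨r₀, fun r hr => le_of_not_gt fun hlt => hr₀ ?_⟩
  exact hW.mem_of_le_of_mem (update_le_update_iff'.2 (WithBot.coe_le_coe.2 hlt.le)) hr

theorem coordSup_mem (hcl : IsClosed W) {j : Fin n} (hgj : g j ≠ ⊥)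
    (hj : j ∈ boundedCoords W g) : coordSup W g j ∈ coordSet W g j := by
  obtain ⟨r, hr⟩ := WithBot.ne_bot_iff_exists.1 hgj
  have hr_mem : r ∈ coordSet W g j := hW.mem_of_le (by simp [update_le_iff, hr])
  exact (isClosed_coordSet hcl j).csSup_mem ⟨r, hr_mem⟩ (coordSet_bddAbove hW hj)

theorem mem_iff_forall_le_coordSup (hcl : IsClosed W) (hg : ∀ i, g i ≠ ⊥) {f : RmaxVec n} :
    (f, g) ∈ W ↔ ∀ j ∈ boundedCoords W g, f j ≤ coordSup W g j := by
  refine ⟨fun hf j hj => ?_, fun hf => hW.mem_of_forall_update_mem fun i => ?_⟩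
  · induction hfj : f j using WithBot.recBotCoe with
    | bot => exact bot_le
    | coe r =>
      have hr : r ∈ coordSet W g j := hW.mem_of_le_of_mem (by simp [update_le_iff, hfj]) hf
      exact WithBot.coe_le_coe.2 (le_csSup (coordSet_bddAbove hW hj) hr)
  · by_cases hi : i ∈ boundedCoords W g
    · exact hW.mem_of_le_of_mem (update_le_update_iff'.2 (hf i hi))
        (coordSup_mem hW hcl (hg i) hi)
    · have hall : coordSet W g i = Set.univ := by simpa [boundedCoords] using hi
      exact hW.update_mem_of_forall_coe (Set.eq_univ_iff_forall.1 hall) (f i)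

theorem mpBracket_polarWitness_le_iff (hcl : IsClosed W) (hg : ∀ i, g i ≠ ⊥) {f : RmaxVec n}
    (c : ℝ) : mpBracket f (polarWitness W g) ≤ c ↔ (f, fun i => g i + c) ∈ W := by
  rw [← hW.add_coe_mem_iff (-c)]
  simp only [Rmax.add_coe_add_neg]
  rw [mem_iff_forall_le_coordSup hW hcl hg, mpBracket_le_iff]
  refine forall_congr' fun i => ?_
  by_cases hi : i ∈ boundedCoords W g
  · simp only [polarWitness, hi, if_true, true_imp_iff, Rmax.add_coe_le_coe_iff]
    ring_nf
  · simp [polarWitness, hi]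

theorem polarWitness_mem_mpDiamond (hcl : IsClosed W) (hg : ∀ i, g i ≠ ⊥) :
    polarWitness W g ∈ mpDiamond W := by
  rintro ⟨a, b⟩ hab
  refine WithBot.forall_le_coe_iff_le.1 fun c hc => ?_
  rw [mpBracket_polarWitness_le_iff hW hcl hg] at hc ⊢
  exact hW.trans hab hc

theorem exists_mem_mpDiamond_lt (hcl : IsClosed W) {f : RmaxVec n} (h : (f, g) ∉ W) :
    ∃ x ∈ mpDiamond W, mpBracket g x < mpBracket f x := by
  obtain ⟨s, hs⟩ := exists_notMem_sup_coe hcl h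
  set g' : RmaxVec n := fun i => max (g i) s
  have hg' : ∀ i, g' i ≠ ⊥ := fun i =>
    ne_bot_of_le_ne_bot WithBot.coe_ne_bot (le_max_right _ _)
  have hx := mpBracket_polarWitness_le_iff hW hcl hg' (f := f) 0
  have hle := (mpBracket_polarWitness_le_iff hW hcl hg' (f := g') 0).2
  simp only [WithBot.coe_zero, add_zero] at hx hle
  refine ⟨polarWitness W g', polarWitness_mem_mpDiamond hW hcl hg', ?_⟩
  calc mpBracket g (polarWitness W g') ≤ mpBracket g' (polarWitness W g') :=
        mpBracket_mono_left _ fun i => le_max_left _ _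
    _ ≤ 0 := hle (hW.mem_of_le le_rfl)
    _ < mpBracket f (polarWitness W g') := lt_of_not_ge (hx.not.2 hs)

theorem eq_mpPolar_mpDiamond (hcl : IsClosed W) : W = mpPolar (mpDiamond W) := by
  refine Set.Subset.antisymm (fun p hp x hx => hx p hp) fun p hp => ?_
  by_contra hpW
  obtain ⟨x, hx, hlt⟩ := exists_mem_mpDiamond_lt hW hcl hpW
  exact (hp x hx).not_gt hlt

end Separation

theorem bipolar_theorem_general (n : ℕ) (W : Set (RmaxVec n × RmaxVec n)) :
    (∃ V : Set (RmaxVec n), W = mpPolar V) ↔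
      (IsClosed W ∧ IsSubsemimodulePair W) ∧
      (∀ f g : RmaxVec n, f ≤ g → (f, g) ∈ W) ∧
      (∀ f g h : RmaxVec n, (f, g) ∈ W → (g, h) ∈ W → (f, h) ∈ W) := by
  constructor
  · rintro ⟨V, rfl⟩
    have hV := isPolarCone_mpPolar V
    exact ⟨⟨isClosed_mpPolar V, hV.1.1⟩, hV.2, hV.1.2.2⟩
  · rintro ⟨⟨hcl, hsub⟩, hord, htrans⟩
    exact ⟨mpDiamond W,
      eq_mpPolar_mpDiamond ⟨⟨hsub, fun f => hord f f le_rfl, htrans⟩, hord⟩ hcl⟩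

/-- **Bipolar theorem** (Theorem 1.1 / Theorem 4.6 of the paper).
A subset `W ⊆ (ℝmax^n)²` is the polar of a cone if, and only if,
(i) `W` is a closed max-plus subsemimodule, (ii) `f ≤ g` implies `(f,g) ∈ W`,
and (iii) `W` is transitive. -/
theorem bipolar_theorem (n : ℕ) (hn : 1 ≤ n) (W : Set (RmaxVec n × RmaxVec n)) :
    (∃ V : Set (RmaxVec n), W = mpPolar V) ↔
      (IsClosed W ∧ IsSubsemimodulePair W) ∧
      (∀ f g : RmaxVec n, f ≤ g → (f, g) ∈ W) ∧
      (∀ f g h : RmaxVec n, (f, g) ∈ W → (g, h) ∈ W → (f, h) ∈ W) :=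
  bipolar_theorem_general n W
end
end

section
/- Separation theorem for closed polar cones: Let W ⊆ (ℝmax^n)^2 be a closed polar cone and let s, t ∈ ℝmax^n be such that (s,t) ∉ W. Then there exists y ∈ ℝmax^n such that max_i (f_i + y_i) ≤ max_j (g_j + y_j) for every (f,g) ∈ W, while ¬( max_i (s_i + y_i) ≤ max_j (t_j + y_j) ). -/
open scoped Classical

noncomputable section

/-!
After enlarging `t` to a vector with real entries (the vectors `t ⊔ c` tend to `t` as `c → -∞`
and `W` is closed), the fiber `F = {f | (f, t) ∈ W}` is a closed, lower, sup-closed set. Such a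
set is the product of its coordinate sections, which are closed lower sets of `ℝmax`, so `F` is a
max-plus half-space `{f | ⟨f, y⟩ ≤ 0}`. Since `W` is stable under adding constants and transitive,
`⟨g, y⟩ ≤ c` forces `⟨f, y⟩ ≤ c` for `(f, g) ∈ W`; and `s ∉ F ∋ t` gives `⟨t, y⟩ ≤ 0 < ⟨s, y⟩`.
-/

open Filter Topology

lemma Rmax.add_coe_neg_nonpos_iff {a : Rmax} {c : ℝ} : a + ((-c : ℝ) : Rmax) ≤ 0 ↔ a ≤ c := by
  induction a using WithBot.recBotCoe with
  | bot => simp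
  | coe a =>
    norm_cast
    rw [← sub_eq_add_neg, sub_nonpos]

lemma Rmax.tendsto_coe_atBot_s4 : Tendsto (fun c : ℝ => (c : Rmax)) atBot (𝓝 ⊥) := by
  refine tendsto_order.2 ⟨fun b hb => absurd hb not_lt_bot, fun b hb => ?_⟩
  induction b using WithBot.recBotCoe with
  | bot => exact absurd hb (lt_irrefl _)
  | coe b => exact (eventually_lt_atBot b).mono fun c hc => WithBot.coe_lt_coe.2 hc

lemma Rmax.exists_mem_iff_add_nonpos {D : Set Rmax} (hD : IsClosed D) (hlow : IsLowerSet D)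
    {r : ℝ} (hr : (r : Rmax) ∈ D) : ∃ y : Rmax, ∀ a, a ∈ D ↔ a + y ≤ 0 := by
  by_cases hbdd : BddAbove D
  · have hmem : sSup D ∈ D := hD.csSup_mem ⟨_, hr⟩ hbdd
    obtain ⟨b, hb⟩ := WithBot.ne_bot_iff_exists.1
      ((WithBot.bot_lt_coe r).trans_le (le_csSup hbdd hr)).ne'
    refine ⟨((-b : ℝ) : Rmax), fun a => ?_⟩
    rw [Rmax.add_coe_neg_nonpos_iff, hb]
    exact ⟨fun ha => le_csSup hbdd ha, fun ha => hlow ha hmem⟩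
  · refine ⟨⊥, fun a => ⟨fun _ => by simp, fun _ => ?_⟩⟩
    obtain ⟨x, hx, hax⟩ := not_bddAbove_iff.1 hbdd a
    exact hlow hax.le hx

lemma mem_iff_forall_update_bot_mem {ι α : Type*} [Fintype ι] [DecidableEq ι] [Lattice α]
    [OrderBot α] {F : Set (ι → α)} (hlow : IsLowerSet F) (hsup : SupClosed F)
    (hne : F.Nonempty) {g : ι → α} : g ∈ F ↔ ∀ i, Function.update ⊥ i (g i) ∈ F := by
  have hupdate_le : ∀ i, Function.update ⊥ i (g i) ≤ g := fun i =>
    update_le_iff.2 ⟨le_rfl, fun j _ => bot_le⟩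
  refine ⟨fun hg i => hlow (hupdate_le i) hg, fun h => ?_⟩
  have hg : g = Finset.univ.sup fun i => Function.update ⊥ i (g i) := by
    refine le_antisymm (fun j => ?_) (Finset.sup_le fun i _ => hupdate_le i)
    have hj := Finset.le_sup (f := fun i => Function.update ⊥ i (g i)) (Finset.mem_univ j) j
    simpa only [Function.update_self] using hj
  obtain ⟨f, hf⟩ := hne
  rw [hg]
  exact Finset.sup_induction (hlow bot_le hf) (fun a ha b hb => hsup ha hb) fun i _ => h i

section RmaxVec

variable {n : ℕ}

lemma RmaxVec.tendsto_sup_const_atBot (t : RmaxVec n) :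
    Tendsto (fun c : ℝ => t ⊔ fun _ => (c : Rmax)) atBot (𝓝 t) := by
  refine tendsto_pi_nhds.2 fun i => ?_
  simpa using tendsto_const_nhds.max Rmax.tendsto_coe_atBot_s4

lemma mpBracket_add_const (g y : RmaxVec n) (c : Rmax) :
    mpBracket (fun i => g i + c) y = mpBracket g y + c := by
  have hmono : Monotone fun a : Rmax => a + c := fun _ _ h => add_le_add_left h c
  rw [mpBracket, mpBracket,
    Finset.apply_sup_eq_sup_comp_of_linearOrder _ hmono (WithBot.bot_add c)]
  exact Finset.sup_congr rfl fun i _ => add_right_comm _ _ _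

lemma mpBracket_mono_left_s4 {g g' : RmaxVec n} (h : g ≤ g') (y : RmaxVec n) :
    mpBracket g y ≤ mpBracket g' y :=
  Finset.sup_mono_fun fun i _ => add_le_add_left (h i) _

lemma mpBracket_nonpos_iff {g y : RmaxVec n} : mpBracket g y ≤ 0 ↔ ∀ i, g i + y i ≤ 0 := by
  simp [mpBracket]

lemma exists_mem_iff_mpBracket_nonpos {F : Set (RmaxVec n)} (hF : IsClosed F)
    (hlow : IsLowerSet F) (hsup : SupClosed F) {t : RmaxVec n} (ht : t ∈ F)
    (ht_ne : ∀ i, t i ≠ ⊥) : ∃ y : RmaxVec n, ∀ g, g ∈ F ↔ mpBracket g y ≤ 0 := by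
  have hcoord : ∀ i, ∃ y : Rmax, ∀ a, Function.update ⊥ i a ∈ F ↔ a + y ≤ 0 := by
    intro i
    obtain ⟨r, hr⟩ := WithBot.ne_bot_iff_exists.1 (ht_ne i)
    refine Rmax.exists_mem_iff_add_nonpos (D := Function.update (⊥ : RmaxVec n) i ⁻¹' F)
      (r := r) (hF.preimage (by fun_prop)) (fun a b hab hb => ?_) ?_
    · exact hlow (update_le_update_iff.2 ⟨hab, fun _ _ => le_rfl⟩) hb
    · exact hlow (update_le_iff.2 ⟨hr.le, fun j _ => bot_le⟩) ht
  choose y hy using hcoord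
  refine ⟨y, fun g => ?_⟩
  rw [mem_iff_forall_update_bot_mem hlow hsup ⟨t, ht⟩, mpBracket_nonpos_iff]
  exact forall_congr' fun i => hy i (g i)

variable {W : Set (RmaxVec n × RmaxVec n)}

lemma IsSubsemimodulePair.add_const_mem (hW : IsSubsemimodulePair W) {f g : RmaxVec n}
    (hfg : (f, g) ∈ W) (c : Rmax) : (fun i => f i + c, fun i => g i + c) ∈ W := by
  have hcomb : ∀ h : RmaxVec n, maxComb h h c c = fun i => h i + c := fun h =>
    funext fun i => max_self _
  simpa only [hcomb] using hW _ hfg _ hfg c c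

lemma IsSubsemimodulePair.sup_mem (hW : IsSubsemimodulePair W) {f g f' g' : RmaxVec n}
    (hfg : (f, g) ∈ W) (hfg' : (f', g') ∈ W) : (f ⊔ f', g ⊔ g') ∈ W := by
  have hcomb : ∀ h h' : RmaxVec n, maxComb h h' 0 0 = h ⊔ h' := fun h h' => by
    funext i; simp [maxComb]
  simpa only [hcomb] using hW _ hfg _ hfg' 0 0

lemma IsSubsemimodulePair.supClosed_fiber (hW : IsSubsemimodulePair W) (t : RmaxVec n) :
    SupClosed {f | (f, t) ∈ W} := fun f hf f' hf' => by
  have h := hW.sup_mem hf hf'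
  rwa [sup_idem] at h

lemma IsPolarCone.isLowerSet_fiber (hW : IsPolarCone W) (t : RmaxVec n) :
    IsLowerSet {f | (f, t) ∈ W} :=
  fun f f' hf'f hf => hW.1.2.2 f' f t (hW.2 f' f hf'f) hf

lemma IsClosed.exists_ge_forall_ne_bot_notMem (hW : IsClosed W) {s t : RmaxVec n}
    (hst : (s, t) ∉ W) : ∃ t', t ≤ t' ∧ (∀ i, t' i ≠ ⊥) ∧ (s, t') ∉ W := by
  by_contra! h
  have hlim : Tendsto (fun c : ℝ => (s, t ⊔ fun _ => (c : Rmax))) atBot (𝓝 (s, t)) :=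
    tendsto_const_nhds.prodMk_nhds (RmaxVec.tendsto_sup_const_atBot t)
  refine hst (hW.mem_of_tendsto hlim (Eventually.of_forall fun c => h _ le_sup_left fun i => ?_))
  exact ((WithBot.bot_lt_coe c).trans_le le_sup_right).ne'

lemma IsPolarCone.exists_separating_of_forall_ne_bot (hclosed : IsClosed W)
    (hW : IsPolarCone W) {s t : RmaxVec n} (ht : ∀ i, t i ≠ ⊥) (hst : (s, t) ∉ W) :
    ∃ y : RmaxVec n,
      (∀ p ∈ W, mpBracket p.1 y ≤ mpBracket p.2 y) ∧ ¬ mpBracket s y ≤ mpBracket t y := by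
  obtain ⟨hsub, hdiag, htrans⟩ := hW.1
  obtain ⟨y, hy⟩ := exists_mem_iff_mpBracket_nonpos
    (hclosed.preimage (Continuous.prodMk_left t)) (hW.isLowerSet_fiber t)
    (hsub.supClosed_fiber t) (hdiag t) ht
  have hshift : ∀ (g : RmaxVec n) (c : ℝ),
      (fun i => g i + ((-c : ℝ) : Rmax), t) ∈ W ↔ mpBracket g y ≤ c := fun g c => by
    rw [← Rmax.add_coe_neg_nonpos_iff, ← mpBracket_add_const]
    exact hy _
  refine ⟨y, fun p hp => WithBot.forall_le_coe_iff_le.1 fun c hc => ?_, fun hsy => hst ?_⟩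
  · exact (hshift p.1 c).1 (htrans _ _ _ (hsub.add_const_mem hp _) ((hshift p.2 c).2 hc))
  · exact (hy s).2 (hsy.trans ((hy t).1 (hdiag t)))

end RmaxVec

/-- **Separation theorem for closed polar cones** (Theorem 4.4 of the paper).
If `W ⊆ (ℝmax^n)²` is a closed polar cone and `(s,t) ∉ W`, then there is
`y ∈ ℝmax^n` with `max_i (f_i + y_i) ≤ max_j (g_j + y_j)` for all `(f,g) ∈ W`,
while `¬(max_i (s_i + y_i) ≤ max_j (t_j + y_j))`. -/
theorem separation_closed_polar_cone (n : ℕ) (W : Set (RmaxVec n × RmaxVec n))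
    (hclosed : IsClosed W) (hW : IsPolarCone W) (s t : RmaxVec n)
    (hst : (s, t) ∉ W) :
    ∃ y : RmaxVec n,
      (∀ p ∈ W, mpBracket p.1 y ≤ mpBracket p.2 y) ∧
      ¬ mpBracket s y ≤ mpBracket t y := by
  obtain ⟨t', htt', ht'_ne, hst'⟩ := hclosed.exists_ge_forall_ne_bot_notMem hst
  obtain ⟨y, hWy, hsy⟩ := hW.exists_separating_of_forall_ne_bot hclosed ht'_ne hst'
  exact ⟨y, hWy, fun h => hsy (h.trans (mpBracket_mono_left_s4 htt' y))⟩
end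
end

section
/- Let W ⊆ (ℝmax^n)^2 be either a closed congruence or a closed polar cone, and let s, t ∈ ℝmax^n be such that ¬(s ≤ t̄) (comparing s, viewed in EReal^n, with t̄ entrywise). Then there exists h ∈ ℝmax^n with all entries finite (h_i ∈ ℝ for every i) such that t ≤ h and ¬(s ≤ h̄). -/
open scoped Classical

noncomputable section

/-- The canonical embedding of `ℝmax = ℝ ∪ {-∞}` into `EReal = ℝ ∪ {±∞}`. -/
def toE : Rmax → EReal := WithBot.recBotCoe ⊥ (fun x => (x : EReal))

/-- The entrywise supremum `ḡ ∈ EReal^n` of `{ f | (f,g) ∈ W }`,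
computed in `EReal`. -/
def ebar {n : ℕ} (W : Set (RmaxVec n × RmaxVec n)) (g : RmaxVec n) :
    Fin n → EReal :=
  fun i => sSup { a : EReal | ∃ f : RmaxVec n, (f, g) ∈ W ∧ a = toE (f i) }

/-- The residuation `u∖x = sSup { λ | ∀ i, u_i + λ ≤ x_i }` in `EReal`. -/
def eres {n : ℕ} (u x : Fin n → EReal) : EReal :=
  sSup { lam : EReal | ∀ i, u i + lam ≤ x i }

/-- `z^β`: the vector in `ℝmax^n` obtained from `z ∈ EReal^n` by replacing the
entries equal to `+∞` by `β` and keeping the other entries. -/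
def cut {n : ℕ} (z : Fin n → EReal) (b : Rmax) : RmaxVec n :=
  fun i => if z i = ⊤ then b else if z i = ⊥ then ⊥ else ((z i).toReal : ℝ)

/-!
Argue by contradiction with the finite approximations `hₖ = t ⊔ (-k)`, which converge to `t`.
Everything rests on an upper semicontinuity of `g ↦ ḡ i`: if `gₖ → t` and `σ < ḡₖ i` for all
`k`, then `σ ≤ t̄ i`. To see it, pick `(fₖ, gₖ) ∈ W` with `σ < fₖ i`; once the `fₖ` are bounded
above, a limit along an ultrafilter lies in `W` by closedness and witnesses `σ ≤ t̄ i`. In a polar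
cone, capping `fₖ` at `σ` keeps it related to `gₖ`. In a congruence, call a coordinate null if
some `e` with `(e, -∞) ∈ W` is finite there. If `i` is null then `t̄ i = +∞`; otherwise the null
coordinates can be erased from `fₖ`, and what remains is bounded: rescaling an unbounded sequence
by its maximum produces in the limit some `(e, -∞) ∈ W` with `e` finite at a non-null coordinate.
-/

open Filter Topology

section Order

variable {α ι : Type*} [LinearOrder α] {l : Filter ι}

lemma WithBot.exists_coe_gt [NoMaxOrder α] [Nonempty α] (a : WithBot α) : ∃ r : α, a < r := by
  obtain ⟨r, -, hr⟩ := WithBot.lt_iff_exists_coe.1 (exists_gt a).choose_spec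
  exact ⟨r, hr⟩

lemma WithBot.tendsto_coe_nhds_bot [TopologicalSpace α] [OrderTopology α] [NoMinOrder α]
    {c : ι → α} (hc : Tendsto c l atBot) : Tendsto (fun k => (c k : WithBot α)) l (𝓝 ⊥) :=
  (WithBot.tendsto_nhds_bot_iff _).2 fun r =>
    (hc.eventually (eventually_lt_atBot r)).mono fun _ hk => WithBot.coe_lt_coe.2 hk

lemma Filter.Tendsto.add_coe_nhds_bot {x : ι → Rmax} {a : Rmax} {c : ι → ℝ}
    (hx : Tendsto x l (𝓝 a)) (hc : Tendsto c l atBot) :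
    Tendsto (fun k => x k + c k) l (𝓝 ⊥) := by
  obtain ⟨r, har⟩ := a.exists_coe_gt
  refine tendsto_nhds_bot_mono
    (WithBot.tendsto_coe_nhds_bot (tendsto_atBot_add_const_left _ r hc)) ?_
  filter_upwards [hx.eventually (eventually_lt_nhds har)] with k hk
  rw [WithBot.coe_add]
  exact add_le_add_left hk.le _

lemma eventually_le_add_coe_atTop (a : Rmax) {b : Rmax} (hb : b ≠ ⊥) :
    ∀ᶠ c : ℝ in atTop, a ≤ b + c := by
  lift b to ℝ using hb
  obtain ⟨r, har⟩ := a.exists_coe_gt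
  filter_upwards [eventually_ge_atTop (r - b)] with c hc
  exact har.le.trans (by rw [← WithBot.coe_add, WithBot.coe_le_coe]; linarith)

lemma toE_mono : Monotone toE := by
  intro a b hab
  induction a using WithBot.recBotCoe with
  | bot => exact bot_le
  | coe a =>
    induction b using WithBot.recBotCoe with
    | bot => exact absurd hab (WithBot.not_coe_le_bot a)
    | coe b => exact EReal.coe_le_coe_iff.2 (WithBot.coe_le_coe.1 hab)

end Order

section Relation

variable {n : ℕ} {W : Set (RmaxVec n × RmaxVec n)} {ι : Type*} {U : Ultrafilter ι}

lemma le_ebar {f g : RmaxVec n} (h : (f, g) ∈ W) (i : Fin n) : toE (f i) ≤ ebar W g i :=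
  le_sSup ⟨f, h, rfl⟩

lemma exists_rel_coe_lt_of_coe_lt_ebar {g : RmaxVec n} {i : Fin n} {b : ℝ}
    (h : (b : EReal) < ebar W g i) : ∃ f, (f, g) ∈ W ∧ (b : Rmax) < f i := by
  obtain ⟨_, ⟨f, hf, rfl⟩, hb⟩ := lt_sSup_iff.1 h
  exact ⟨f, hf, lt_of_not_ge fun hfb => hb.not_ge (toE_mono hfb)⟩

lemma exists_rel_tendsto_of_eventually_le (hclosed : IsClosed W) {f g : ι → RmaxVec n}
    {t : RmaxVec n} (hfg : ∀ k, (f k, g k) ∈ W) (hf : ∃ C : ℝ, ∀ᶠ k in U, ∀ j, f k j ≤ C)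
    (hg : Tendsto g U (𝓝 t)) : ∃ F, (F, t) ∈ W ∧ Tendsto f U (𝓝 F) := by
  obtain ⟨C, hC⟩ := hf
  have hK := isCompact_Icc (a := (⊥ : RmaxVec n)) (b := fun _ => (C : Rmax))
  obtain ⟨F, -, hF⟩ :=
    hK.ultrafilter_le_nhds (U.map f) (le_principal_iff.2 (hC.mono fun k hk => ⟨bot_le, hk⟩))
  exact ⟨F, hclosed.mem_of_tendsto (Tendsto.prodMk_nhds hF hg) (.of_forall hfg), hF⟩

def nullSupport (W : Set (RmaxVec n × RmaxVec n)) : Set (Fin n) :=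
  {j | ∃ e, (e, ⊥) ∈ W ∧ e j ≠ ⊥}

namespace IsSubsemimodulePair

variable (hW : IsSubsemimodulePair W)
include hW

lemma add_const_mem_s10 {f g : RmaxVec n} (h : (f, g) ∈ W) (c : Rmax) :
    (fun j => f j + c, fun j => g j + c) ∈ W := by
  convert hW _ h _ h c c using 2 <;> funext j <;> simp [maxComb]

lemma sup_mem_s10 {p q : RmaxVec n × RmaxVec n} (hp : p ∈ W) (hq : q ∈ W) : p ⊔ q ∈ W := by
  convert hW p hp q hq 0 0 using 2 <;> funext j <;> simp [maxComb]

lemma exists_eventually_le_of_eq_bot_on_nullSupport (hclosed : IsClosed W)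
    {a g : ι → RmaxVec n} {t : RmaxVec n} (hag : ∀ k, (a k, g k) ∈ W)
    (ha : ∀ k, ∀ j ∈ nullSupport W, a k j = ⊥) (hg : Tendsto g U (𝓝 t)) :
    ∃ C : ℝ, ∀ᶠ k in U, ∀ j, a k j ≤ C := by
  by_contra! hlarge
  obtain ⟨j₀, hj₀⟩ : ∃ j₀, ∀ᶠ k in U, ∀ j, a k j ≤ a k j₀ := by
    refine Ultrafilter.eventually_exists_iff.1 ((hlarge 0).mono fun k ⟨j, _⟩ => ?_)
    have : Nonempty (Fin n) := ⟨j⟩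
    exact Finite.exists_max (a k)
  have hlarge₀ (C : ℝ) : ∀ᶠ k in U, (C : Rmax) < a k j₀ := by
    filter_upwards [hlarge C, hj₀] with k ⟨j, hj⟩ hk
    exact hj.trans_le (hk j)
  set m : ι → ℝ := fun k => (a k j₀).unbotD 0
  have hm : ∀ᶠ k in U, a k j₀ = m k := by
    filter_upwards [hlarge₀ 0] with k hk
    lift a k j₀ to ℝ using ne_bot_of_gt hk with r hr
    simp [m, ← hr]
  have hm_atTop : Tendsto m U atTop := by
    refine tendsto_atTop.2 fun C => ?_
    filter_upwards [hlarge₀ C, hm] with k hk hmk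
    rw [hmk] at hk
    exact (WithBot.coe_lt_coe.1 hk).le
  -- Rescaling by `-m k` keeps `a k` below `0` and sends `g k` to `⊥`.
  obtain ⟨F, hF, hF_lim⟩ := exists_rel_tendsto_of_eventually_le hclosed
    (fun k => hW.add_const_mem_s10 (hag k) ((-m k : ℝ) : Rmax))
    ⟨0, by
      filter_upwards [hj₀, hm] with k hk hmk j
      calc a k j + ((-m k : ℝ) : Rmax) ≤ m k + ((-m k : ℝ) : Rmax) := by
            gcongr; exact hmk ▸ hk j
        _ = ((0 : ℝ) : Rmax) := by rw [← WithBot.coe_add, add_neg_cancel]⟩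
    (tendsto_pi_nhds.2 fun j =>
      (tendsto_pi_nhds.1 hg j).add_coe_nhds_bot (tendsto_neg_atTop_atBot.comp hm_atTop))
  have hF_j₀ : F j₀ = 0 := by
    refine tendsto_nhds_unique (tendsto_pi_nhds.1 hF_lim j₀) (tendsto_const_nhds.congr' ?_)
    filter_upwards [hm] with k hmk
    rw [hmk, ← WithBot.coe_add, add_neg_cancel, WithBot.coe_zero]
  obtain ⟨k, hk⟩ := (hlarge₀ 0).exists
  rw [ha k j₀ ⟨F, hF, by simp [hF_j₀]⟩] at hk
  exact not_lt_bot hk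

end IsSubsemimodulePair

namespace IsPrecongruence

variable (hW : IsPrecongruence W)
include hW

lemma sup_add_const_mem {e : RmaxVec n} (he : (e, ⊥) ∈ W) (c : Rmax) (g : RmaxVec n) :
    ((fun j => e j + c) ⊔ g, g) ∈ W := by
  convert hW.1.sup_mem_s10 (hW.1.add_const_mem_s10 he c) (hW.2.1 g) using 1
  ext j <;> simp

lemma exists_bot_rel_ne_bot_on_nullSupport :
    ∃ e, (e, ⊥) ∈ W ∧ ∀ j ∈ nullSupport W, e j ≠ ⊥ := by
  have hchoice (j : Fin n) : ∃ e, (e, ⊥) ∈ W ∧ (j ∈ nullSupport W → e j ≠ ⊥) := by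
    by_cases hj : j ∈ nullSupport W
    · obtain ⟨e, he, hej⟩ := hj
      exact ⟨e, he, fun _ => hej⟩
    · exact ⟨⊥, hW.2.1 ⊥, fun h => absurd h hj⟩
  choose E hEW hE using hchoice
  refine ⟨Finset.univ.sup E, ?_, fun j hj => ?_⟩
  · refine Finset.sup_induction (p := fun e => (e, ⊥) ∈ W) (hW.2.1 ⊥) (fun a ha b hb => ?_)
      fun j _ => hEW j
    simpa using hW.1.sup_mem_s10 ha hb
  · exact ne_bot_of_le_ne_bot (hE j hj) (Finset.le_sup (f := E) (Finset.mem_univ j) j)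

lemma ebar_eq_top_of_mem_nullSupport {j : Fin n} (hj : j ∈ nullSupport W) (g : RmaxVec n) :
    ebar W g j = ⊤ := by
  obtain ⟨e, he, hej⟩ := hj
  lift e j to ℝ using hej with r hr
  refine (EReal.eq_top_iff_forall_lt _).2 fun y => ?_
  have hmem := hW.sup_add_const_mem he ((y + 1 - r : ℝ) : Rmax) g
  calc (y : EReal) < ((y + 1 : ℝ) : EReal) := EReal.coe_lt_coe_iff.2 (lt_add_one y)
    _ = toE (e j + ((y + 1 - r : ℝ) : Rmax)) := by
        rw [← hr, ← WithBot.coe_add, add_sub_cancel]; rfl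
    _ ≤ toE (((fun j => e j + ((y + 1 - r : ℝ) : Rmax)) ⊔ g) j) := toE_mono le_sup_left
    _ ≤ ebar W g j := le_ebar hmem j

end IsPrecongruence

lemma IsCongruence.restrict_mem (hW : IsCongruence W) {f g : RmaxVec n} (h : (f, g) ∈ W) :
    (fun j => if j ∈ nullSupport W then ⊥ else f j, g) ∈ W := by
  obtain ⟨hpre, hsymm⟩ := hW
  obtain ⟨e, he, he_ne⟩ := hpre.exists_bot_rel_ne_bot_on_nullSupport
  set a : RmaxVec n := fun j => if j ∈ nullSupport W then ⊥ else f j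
  have hshift (j : Fin n) : ∀ᶠ c : ℝ in atTop, j ∈ nullSupport W → f j ≤ e j + c := by
    by_cases hj : j ∈ nullSupport W
    · exact (eventually_le_add_coe_atTop (f j) (he_ne j hj)).mono fun _ h _ => h
    · exact .of_forall fun _ h => absurd h hj
  obtain ⟨c, hc⟩ := (eventually_all.2 hshift).exists
  set b : RmaxVec n := (fun j => e j + c) ⊔ a
  have hab : a ≤ f := fun j => by
    by_cases hj : j ∈ nullSupport W <;> simp [a, hj]
  have hfb : f ≤ b := fun j => by
    by_cases hj : j ∈ nullSupport W
    · exact (hc j hj).trans le_sup_left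
    · exact le_sup_of_le_right (by simp [a, hj])
  have hba : (b, a) ∈ W := hpre.sup_add_const_mem he c a
  have hbf : (b, f) ∈ W := by
    simpa [sup_eq_left.2 hfb, sup_eq_right.2 hab] using hpre.1.sup_mem_s10 hba (hpre.2.1 f)
  exact hpre.2.2 _ _ _ (hpre.2.2 _ _ _ (hsymm _ _ hba) hbf) h

variable {f g : ι → RmaxVec n} {t : RmaxVec n} {i : Fin n} {σ : ℝ}

lemma coe_le_ebar_of_eventually_le (hclosed : IsClosed W) (hfg : ∀ k, (f k, g k) ∈ W)
    (hf : ∃ C : ℝ, ∀ᶠ k in U, ∀ j, f k j ≤ C) (hg : Tendsto g U (𝓝 t))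
    (hσ : ∀ k, (σ : Rmax) ≤ f k i) : (σ : EReal) ≤ ebar W t i := by
  obtain ⟨F, hF, hF_lim⟩ := exists_rel_tendsto_of_eventually_le hclosed hfg hf hg
  have hσF : (σ : Rmax) ≤ F i := ge_of_tendsto (tendsto_pi_nhds.1 hF_lim i) (.of_forall hσ)
  exact (toE_mono hσF).trans (le_ebar hF i)

lemma IsPolarCone.coe_le_ebar (hW : IsPolarCone W) (hclosed : IsClosed W)
    (hfg : ∀ k, (f k, g k) ∈ W) (hg : Tendsto g U (𝓝 t)) (hσ : ∀ k, (σ : Rmax) ≤ f k i) :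
    (σ : EReal) ≤ ebar W t i :=
  coe_le_ebar_of_eventually_le (f := fun k => f k ⊓ fun _ => (σ : Rmax)) hclosed
    (fun k => hW.1.2.2 _ _ _ (hW.2 _ _ inf_le_left) (hfg k))
    ⟨σ, .of_forall fun _ _ => inf_le_right⟩ hg fun k => le_inf (hσ k) le_rfl

lemma IsCongruence.coe_le_ebar (hW : IsCongruence W) (hclosed : IsClosed W)
    (hfg : ∀ k, (f k, g k) ∈ W) (hg : Tendsto g U (𝓝 t)) (hσ : ∀ k, (σ : Rmax) ≤ f k i) :
    (σ : EReal) ≤ ebar W t i := by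
  by_cases hi : i ∈ nullSupport W
  · rw [hW.1.ebar_eq_top_of_mem_nullSupport hi]
    exact le_top
  have hres := fun k => hW.restrict_mem (hfg k)
  refine coe_le_ebar_of_eventually_le hclosed hres
    (hW.1.1.exists_eventually_le_of_eq_bot_on_nullSupport hclosed hres
      (fun _ _ hj => if_pos hj) hg) hg fun k => ?_
  simpa [hi] using hσ k

lemma coe_le_ebar_of_tendsto (hclosed : IsClosed W) (hW : IsCongruence W ∨ IsPolarCone W)
    (hg : Tendsto g U (𝓝 t)) (hσ : ∀ k, (σ : EReal) < ebar W (g k) i) :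
    (σ : EReal) ≤ ebar W t i := by
  choose f hfg hf using fun k => exists_rel_coe_lt_of_coe_lt_ebar (hσ k)
  rcases hW with hW | hW
  · exact hW.coe_le_ebar hclosed hfg hg fun k => (hf k).le
  · exact hW.coe_le_ebar hclosed hfg hg fun k => (hf k).le

end Relation

/-- Lemma 4.6 of the paper: if `W ⊆ (ℝmax^n)²` is a closed congruence or a
closed polar cone and `¬(s ≤ t̄)`, then there exists `h ∈ ℝmax^n` with finite
entries such that `t ≤ h` and `¬(s ≤ h̄)`. -/
theorem exists_finite_perturbation (n : ℕ) (W : Set (RmaxVec n × RmaxVec n))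
    (hclosed : IsClosed W) (hW : IsCongruence W ∨ IsPolarCone W)
    (s t : RmaxVec n) (hs : ¬ ∀ i, toE (s i) ≤ ebar W t i) :
    ∃ h : RmaxVec n, (∀ i, h i ≠ ⊥) ∧ t ≤ h ∧ ¬ ∀ i, toE (s i) ≤ ebar W h i := by
  by_contra! hcon
  obtain ⟨i, hi⟩ := not_forall.1 hs
  obtain ⟨σ, hσt, hσs⟩ := EReal.lt_iff_exists_real_btwn.1 (not_le.1 hi)
  set h : ℕ → RmaxVec n := fun k => t ⊔ fun _ => ((-k : ℝ) : Rmax)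
  have h_tendsto : Tendsto h atTop (𝓝 t) := tendsto_pi_nhds.2 fun j => by
    simpa [h] using tendsto_const_nhds.max
      (WithBot.tendsto_coe_nhds_bot (α := ℝ)
        (tendsto_neg_atTop_atBot.comp tendsto_natCast_atTop_atTop))
  have hσh (k : ℕ) : (σ : EReal) < ebar W (h k) i :=
    hσs.trans_le <| hcon (h k) (fun j => ne_bot_of_le_ne_bot WithBot.coe_ne_bot le_sup_right)
      le_sup_left i
  exact hσt.not_ge <| coe_le_ebar_of_tendsto (U := .of atTop) hclosed hW
    (h_tendsto.mono_left (Ultrafilter.of_le atTop)) hσh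
end
end

section
/- Let W ⊆ (ℝmax^n)^2 be a closed congruence. Then for all f, g ∈ ℝmax^n: if f ≤ ḡ (comparing f, viewed in EReal^n, with ḡ entrywise), then f̄ ≤ ḡ. -/
open scoped Classical

noncomputable section

-- helper lemmas
lemma toE_le_toE {a b : Rmax} (h : toE a ≤ toE b) : a ≤ b := by
  induction a using WithBot.recBotCoe <;> induction b using WithBot.recBotCoe <;>
    simp_all [toE, WithBot.recBotCoe]
lemma toE_mono_s12 {a b : Rmax} (h : a ≤ b) : toE a ≤ toE b := by
  induction a using WithBot.recBotCoe <;> induction b using WithBot.recBotCoe <;>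
    simp_all [toE, WithBot.recBotCoe]
lemma rmax_sup_add (a b : Rmax) (c : ℝ) : max a b + (c:Rmax) = max (a+c) (b+c) := by
  induction a using WithBot.recBotCoe <;> induction b using WithBot.recBotCoe <;>
    simp [← WithBot.coe_add, WithBot.bot_add, WithBot.add_bot, max_def] <;>
      split_ifs <;> simp_all <;> linarith
lemma rmax_le_add (a : Rmax) (c : ℝ) (hc : 0 ≤ c) : a ≤ a + (c:Rmax) := by
  induction a using WithBot.recBotCoe <;> simp [← WithBot.coe_add]; linarith
lemma rmax_add_add (a : Rmax) (c d : ℝ) : a + (c:Rmax) + (d:Rmax) = a + ((c+d:ℝ):Rmax) := by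
  induction a using WithBot.recBotCoe <;> simp [← WithBot.coe_add]; ring_nf
lemma rmax_add_le_add (a b : Rmax) (c : ℝ) (h : a ≤ b) : a + (c:Rmax) ≤ b + (c:Rmax) := by
  induction a using WithBot.recBotCoe <;> induction b using WithBot.recBotCoe <;>
    simp_all [← WithBot.coe_add, WithBot.bot_add]


/-- Lemma 4.8 (property (18)) of the paper: if `W ⊆ (ℝmax^n)²` is a closed
congruence and `f ≤ ḡ`, then `f̄ ≤ ḡ`. -/
theorem ebar_le_of_le_ebar (n : ℕ) (W : Set (RmaxVec n × RmaxVec n))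
    (hclosed : IsClosed W) (hW : IsCongruence W) (f g : RmaxVec n)
    (hf : ∀ i, toE (f i) ≤ ebar W g i) :
    ebar W f ≤ ebar W g := by
  obtain ⟨⟨hsub, hrefl, htrans⟩, hsymm⟩ := hW
  intro i
  refine sSup_le ?_
  rintro a ⟨h, hhf, rfl⟩
  have key : ∀ ε : ℝ, 0 < ε →
      ((fun j => max (h j + ((-ε:ℝ):Rmax)) (g j)), g) ∈ W := by
    intro ε hε
    -- Step 1: find u in the class of g with u ≥ f - ε
    have step1 : ∀ s : Finset (Fin n), ∃ u : RmaxVec n,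
        (u, g) ∈ W ∧ ∀ j ∈ s, f j + ((-ε:ℝ):Rmax) ≤ u j := by
      intro s
      induction s using Finset.induction_on with
      | empty => exact ⟨g, hrefl g, by simp⟩
      | @insert j s' hjs ih =>
        obtain ⟨u, hu, hub⟩ := ih
        rcases hj : f j with _ | r
        · refine ⟨u, hu, ?_⟩
          intro k hk
          rcases Finset.mem_insert.mp hk with rfl | hk
          · rw [hj, WithBot.none_eq_bot, WithBot.bot_add]; exact bot_le
          · exact hub k hk
        · have hfj : ((r:ℝ):EReal) ≤ ebar W g j := by
            have := hf j; rw [hj] at this; exact this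
          have h1 : ((r - ε : ℝ) : EReal) < ebar W g j :=
            lt_of_lt_of_le (by exact_mod_cast sub_lt_self r hε) hfj
          obtain ⟨a, ⟨w, hw, rfl⟩, hlt⟩ := lt_sSup_iff.mp h1
          have hcomb : (maxComb u w 0 0, maxComb g g 0 0) ∈ W :=
            hsub (u, g) hu (w, g) hw 0 0
          have e1 : maxComb u w 0 0 = fun k => max (u k) (w k) := by
            funext k; simp [maxComb]
          have e2 : maxComb g g 0 0 = g := by funext k; simp [maxComb]
          rw [e1, e2] at hcomb
          refine ⟨fun k => max (u k) (w k), hcomb, ?_⟩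
          intro k hk
          rcases Finset.mem_insert.mp hk with rfl | hk
          · have hle : f k + ((-ε:ℝ):Rmax) ≤ w k := by
              refine toE_le_toE ?_
              have : f k + ((-ε:ℝ):Rmax) = ((r - ε : ℝ):Rmax) := by
                rw [hj]
                show ((r:ℝ):Rmax) + ((-ε:ℝ):Rmax) = _
                rw [← WithBot.coe_add, show r + -ε = r - ε from by ring]
              rw [this]
              exact le_of_lt (by exact_mod_cast hlt)
            exact hle.trans (le_max_right _ _)
          · exact (hub k hk).trans (le_max_left _ _)
    obtain ⟨u, hu, hufe⟩ := step1 Finset.univ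
    have hfu : ∀ k, f k ≤ u k + ((ε:ℝ):Rmax) := by
      intro k
      have h1 := rmax_add_le_add _ _ ε (hufe k (Finset.mem_univ k))
      have h2 : f k + ((-ε:ℝ):Rmax) + ((ε:ℝ):Rmax) = f k := by
        rw [rmax_add_add]; norm_num
      rwa [h2] at h1
    -- Step 2
    have h2 : (maxComb f u 0 0, maxComb h g 0 0) ∈ W :=
      hsub (f, h) (hsymm h f hhf) (u, g) hu 0 0
    have h3 := hsymm _ _ h2
    have h4 := hsymm _ _ hu
    have h5 : (maxComb (maxComb h g 0 0) g 0 ((ε:ℝ):Rmax),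
        maxComb (maxComb f u 0 0) u 0 ((ε:ℝ):Rmax)) ∈ W :=
      hsub _ h3 _ h4 0 ((ε:ℝ):Rmax)
    have e5a : maxComb (maxComb h g 0 0) g 0 ((ε:ℝ):Rmax)
        = fun k => max (h k) (g k + ((ε:ℝ):Rmax)) := by
      funext k
      simp only [maxComb, add_zero]
      rw [max_assoc, max_eq_right (rmax_le_add (g k) ε hε.le)]
    have e5b : maxComb (maxComb f u 0 0) u 0 ((ε:ℝ):Rmax)
        = fun k => u k + ((ε:ℝ):Rmax) := by
      funext k
      simp only [maxComb, add_zero]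
      exact max_eq_right (max_le (hfu k) (rmax_le_add _ _ hε.le))
    rw [e5a, e5b] at h5
    have h6 : (maxComb u u ((ε:ℝ):Rmax) ((ε:ℝ):Rmax),
        maxComb g g ((ε:ℝ):Rmax) ((ε:ℝ):Rmax)) ∈ W := hsub _ hu _ hu _ _
    have e6a : maxComb u u ((ε:ℝ):Rmax) ((ε:ℝ):Rmax) = fun k => u k + ((ε:ℝ):Rmax) := by
      funext k; simp [maxComb]
    have e6b : maxComb g g ((ε:ℝ):Rmax) ((ε:ℝ):Rmax) = fun k => g k + ((ε:ℝ):Rmax) := by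
      funext k; simp [maxComb]
    rw [e6a, e6b] at h6
    have h7 := htrans _ _ _ h5 h6
    have h8 : (maxComb (fun k => max (h k) (g k + ((ε:ℝ):Rmax)))
          (fun k => max (h k) (g k + ((ε:ℝ):Rmax))) ((-ε:ℝ):Rmax) ((-ε:ℝ):Rmax),
        maxComb (fun k => g k + ((ε:ℝ):Rmax)) (fun k => g k + ((ε:ℝ):Rmax))
          ((-ε:ℝ):Rmax) ((-ε:ℝ):Rmax)) ∈ W := hsub _ h7 _ h7 _ _
    have e8a : maxComb (fun k => max (h k) (g k + ((ε:ℝ):Rmax)))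
          (fun k => max (h k) (g k + ((ε:ℝ):Rmax))) ((-ε:ℝ):Rmax) ((-ε:ℝ):Rmax)
        = fun j => max (h j + ((-ε:ℝ):Rmax)) (g j) := by
      funext k
      simp only [maxComb, max_self]
      rw [rmax_sup_add, rmax_add_add]
      norm_num
    have e8b : maxComb (fun k => g k + ((ε:ℝ):Rmax)) (fun k => g k + ((ε:ℝ):Rmax))
        ((-ε:ℝ):Rmax) ((-ε:ℝ):Rmax) = g := by
      funext k
      simp only [maxComb, max_self]
      rw [rmax_add_add]
      norm_num
    rw [e8a, e8b] at h8
    exact h8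
  -- conclude
  have hle : ∀ ε : ℝ, 0 < ε → toE (h i + ((-ε:ℝ):Rmax)) ≤ ebar W g i := by
    intro ε hε
    refine le_trans (toE_mono_s12 (le_max_left (h i + ((-ε:ℝ):Rmax)) (g i))) ?_
    exact le_sSup ⟨_, key ε hε, rfl⟩
  rcases hhi : h i with _ | r
  · exact bot_le
  · by_contra hc
    push_neg at hc
    have hc' : ebar W g i < ((r:ℝ):EReal) := hc
    obtain ⟨x, hx1, hx2⟩ := EReal.lt_iff_exists_real_btwn.mp hc'
    have hεp : (0:ℝ) < r - x := by
      have : (x:ℝ) < r := by exact_mod_cast hx2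
      linarith
    have := hle (r - x) hεp
    rw [hhi] at this
    have this2 : ((r + -(r - x) : ℝ) : EReal) ≤ ebar W g i := this
    rw [show r + -(r - x) = x from by ring] at this2
    exact absurd (lt_of_le_of_lt this2 hx1) (lt_irrefl _)
end
end

section
/- Let W ⊆ (EReal^n)^2 be a complete pre-congruence. Then for all f, g ∈ EReal^n with (f,g) ∈ W and every h ∈ EReal^n, one has g∖ē(h) ≤ f∖ē(h). -/
open scoped Classical

noncomputable section

/-- Vectors of the semimodule `EReal^n` over the completed max-plus
semiring `EReal = ℝ ∪ {±∞}`. -/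
abbrev EVec (n : ℕ) := Fin n → EReal

/-- `W ⊆ (EReal^n)² ≅ EReal^{2n}` is a complete subsemimodule (with the
entrywise operations): it is stable under entrywise max, under the entrywise
addition of any scalar, and under arbitrary (entrywise) suprema. -/
def IsCompleteSubsemimoduleE {n : ℕ} (W : Set (EVec n × EVec n)) : Prop :=
  (∀ p ∈ W, ∀ q ∈ W, p ⊔ q ∈ W) ∧
  (∀ p ∈ W, ∀ lam : EReal,
    ((fun i => p.1 i + lam, fun i => p.2 i + lam) : EVec n × EVec n) ∈ W) ∧
  (∀ Q : Set (EVec n × EVec n), Q ⊆ W → sSup Q ∈ W)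

/-- A complete pre-congruence: a complete subsemimodule of `(EReal^n)²`
containing the diagonal and transitive. -/
def IsCompletePrecongruenceE {n : ℕ} (W : Set (EVec n × EVec n)) : Prop :=
  IsCompleteSubsemimoduleE W ∧ (∀ f : EVec n, (f, f) ∈ W) ∧
    ∀ f g h : EVec n, (f, g) ∈ W → (g, h) ∈ W → (f, h) ∈ W

/-- A complete polar cone: a complete pre-congruence such that `f ≤ g`
implies `(f,g) ∈ W`. -/
def IsCompletePolarConeE {n : ℕ} (W : Set (EVec n × EVec n)) : Prop :=
  IsCompletePrecongruenceE W ∧ ∀ f g : EVec n, f ≤ g → (f, g) ∈ W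

/-- A complete congruence: a symmetric complete pre-congruence. -/
def IsCompleteCongruenceE {n : ℕ} (W : Set (EVec n × EVec n)) : Prop :=
  IsCompletePrecongruenceE W ∧ ∀ f g : EVec n, (f, g) ∈ W → (g, f) ∈ W

/-- The entrywise supremum `ē(g) = sSup { f | (f,g) ∈ W }`. -/
def ebarE {n : ℕ} (W : Set (EVec n × EVec n)) (g : EVec n) : EVec n :=
  sSup { f : EVec n | (f, g) ∈ W }

/-- The residuation `u∖x = sSup { λ | ∀ i, u_i + λ ≤ x_i }` in `EReal`. -/
def eresE {n : ℕ} (u x : EVec n) : EReal :=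
  sSup { lam : EReal | ∀ i, u i + lam ≤ x i }

/-- Lemma 3.1 of the paper, specialized to `X = EReal^n`: for a complete
pre-congruence `W`, `(f,g) ∈ W` implies `g∖ē(h) ≤ f∖ē(h)` for all `h`. -/
theorem complete_res_ebar_antitone (n : ℕ) (W : Set (EVec n × EVec n))
    (hW : IsCompletePrecongruenceE W) (f g : EVec n) (hfg : (f, g) ∈ W)
    (h : EVec n) :
    eresE g (ebarE W h) ≤ eresE f (ebarE W h) := by
  obtain ⟨⟨hsup, hscal, hsSup⟩, hdiag, htrans⟩ := hW
  set e := ebarE W h with he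
  -- key: (e, h) ∈ W
  have heh : (e, h) ∈ W := by
    have hQ : sSup {p : EVec n × EVec n | p ∈ W ∧ p.2 = h} ∈ W :=
      hsSup _ (fun p hp => hp.1)
    have hne : ({p : EVec n × EVec n | p ∈ W ∧ p.2 = h}).Nonempty :=
      ⟨(h, h), hdiag h, rfl⟩
    have h1 : sSup {p : EVec n × EVec n | p ∈ W ∧ p.2 = h} = (e, h) := by
      have hfst : (sSup {p : EVec n × EVec n | p ∈ W ∧ p.2 = h}).1 = e := by
        rw [Prod.fst_sSup, he, ebarE]
        congr 1
        ext x
        constructor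
        · rintro ⟨p, ⟨hpW, hp2⟩, rfl⟩
          simpa [← hp2] using hpW
        · intro hx
          exact ⟨(x, h), ⟨hx, rfl⟩, rfl⟩
      have hsnd : (sSup {p : EVec n × EVec n | p ∈ W ∧ p.2 = h}).2 = h := by
        rw [Prod.snd_sSup]
        apply le_antisymm
        · apply sSup_le
          rintro x ⟨p, ⟨hpW, hp2⟩, rfl⟩
          exact hp2.le
        · exact le_sSup ⟨(h, h), ⟨hdiag h, rfl⟩, rfl⟩
      exact Prod.ext hfst hsnd
    rwa [h1] at hQ
  apply sSup_le
  intro lam hlam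
  apply le_sSup
  intro i
  -- hlam : ∀ i, g i + lam ≤ e i
  have hmem : ((fun i => f i + lam, fun i => g i + lam) : EVec n × EVec n) ∈ W :=
    hscal (f, g) hfg lam
  have hmax : (((fun i => f i + lam) : EVec n) ⊔ e, ((fun i => g i + lam) : EVec n) ⊔ e) ∈ W := by
    have := hsup _ hmem _ (hdiag e)
    simpa using this
  have hge : ((fun i => g i + lam) : EVec n) ⊔ e = e := by
    apply sup_eq_right.2
    intro j
    exact hlam j
  rw [hge] at hmax
  have hWh : (((fun i => f i + lam) : EVec n) ⊔ e, h) ∈ W := htrans _ _ _ hmax heh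
  have hle : ((fun i => f i + lam) : EVec n) ⊔ e ≤ e := le_sSup hWh
  calc f i + lam ≤ (((fun i => f i + lam) : EVec n) ⊔ e) i := le_sup_left
    _ ≤ e i := hle i
end
end

section
/- Separation theorem for complete polar cones (specialized to EReal^n): Let W ⊆ (EReal^n)^2 be a complete polar cone and let s, t ∈ EReal^n be such that (s,t) ∉ W. Then there exists x ∈ EReal^n such that g∖x ≤ f∖x for every (f,g) ∈ W, while ¬( t∖x ≤ s∖x ). -/
open scoped Classical

noncomputable section

/-!
Take `x := ē(t)`, the largest `f` with `(f, t) ∈ W`; it exists, with `(x, t) ∈ W`, because `W` is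
closed under suprema. Polarity and transitivity make `{f | f ≤ x}` closed under `W`: if
`(f, g) ∈ W` and `g ≤ x` then `(f, t) ∈ W`, so `f ≤ x`. Shifting `(f, g)` by `λ = g∖x` gives
`g∖x ≤ f∖x`. Finally `t ≤ x` means `0 ≤ t∖x`; if `t∖x ≤ s∖x` then `s ≤ x`, and
`(s, x), (x, t) ∈ W` would force `(s, t) ∈ W`.
-/

namespace EReal

theorem add_sSup_le {u x : EReal} {S : Set EReal} (h : ∀ lam ∈ S, u + lam ≤ x) :
    u + sSup S ≤ x := by
  induction u with
  | bot => simp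
  | coe u =>
    have add_le_iff : ∀ lam : EReal, (u : EReal) + lam ≤ x ↔ lam ≤ x - u := fun lam => by
      rw [add_comm, le_sub_iff_add_le (.inl (coe_ne_bot u)) (.inl (coe_ne_top u))]
    exact (add_le_iff _).2 <| sSup_le fun lam hlam => (add_le_iff lam).1 (h lam hlam)
  | top =>
    rcases eq_or_ne (sSup S) ⊥ with hbot | hbot
    · simp [hbot]
    -- `⊤ + lam = ⊤` for any `lam ≠ ⊥`, so `h` already gives `x = ⊤`.
    obtain ⟨lam, hlam, hlam_ne⟩ : ∃ lam ∈ S, lam ≠ ⊥ := by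
      by_contra! hS
      exact hbot (sSup_eq_bot.2 hS)
    have htop := h lam hlam
    rw [top_add_of_ne_bot hlam_ne] at htop
    exact le_top.trans htop

end EReal

section Residuation

variable {n : ℕ}

theorem le_eresE_iff {u x : EVec n} {lam : EReal} :
    lam ≤ eresE u x ↔ ∀ i, u i + lam ≤ x i :=
  ⟨fun hlam i => (add_le_add_right hlam _).trans (EReal.add_sSup_le fun _ hmu => hmu i),
    fun hlam => le_sSup hlam⟩

theorem add_eresE_le (u x : EVec n) (i : Fin n) : u i + eresE u x ≤ x i :=
  le_eresE_iff.1 le_rfl i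

theorem zero_le_eresE_iff {u x : EVec n} : 0 ≤ eresE u x ↔ u ≤ x := by
  simp only [le_eresE_iff, add_zero, Pi.le_def]

end Residuation

section PolarCone

variable {n : ℕ} {W : Set (EVec n × EVec n)}

theorem IsCompletePrecongruenceE.ebarE_mem (hW : IsCompletePrecongruenceE W) (t : EVec n) :
    (ebarE W t, t) ∈ W := by
  obtain ⟨⟨-, -, hsSup⟩, hdiag, -⟩ := hW
  have hprod := hsSup ({f | (f, t) ∈ W} ×ˢ {t}) (by rintro ⟨f, _⟩ ⟨hf, rfl⟩; exact hf)
  rwa [sSup_prod ⟨t, hdiag t⟩ (Set.singleton_nonempty t), sSup_singleton] at hprod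

theorem IsCompletePolarConeE.le_ebarE_of_mem (hW : IsCompletePolarConeE W) {f g t : EVec n}
    (hfg : (f, g) ∈ W) (hg : g ≤ ebarE W t) : f ≤ ebarE W t := by
  have hxt := hW.1.ebarE_mem t
  obtain ⟨⟨-, -, htrans⟩, hcone⟩ := hW
  exact le_sSup (htrans _ _ _ hfg (htrans _ _ _ (hcone _ _ hg) hxt))

end PolarCone

/-- **Separation theorem for complete polar cones** (Theorem 3.3 of the paper,
specialized to `X = EReal^n`): if `W` is a complete polar cone and
`(s,t) ∉ W`, then there is `x` with `g∖x ≤ f∖x` for all `(f,g) ∈ W`, while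
`¬(t∖x ≤ s∖x)`. -/
theorem separation_complete_polar_cone (n : ℕ) (W : Set (EVec n × EVec n))
    (hW : IsCompletePolarConeE W) (s t : EVec n) (hst : (s, t) ∉ W) :
    ∃ x : EVec n,
      (∀ p ∈ W, eresE p.2 x ≤ eresE p.1 x) ∧
      ¬ eresE t x ≤ eresE s x := by
  obtain ⟨⟨⟨-, hshift, -⟩, hdiag, htrans⟩, hcone⟩ := id hW
  refine ⟨ebarE W t, fun p hp => ?_, fun hts => ?_⟩
  · have hshifted := hshift p hp (eresE p.2 (ebarE W t))
    exact le_eresE_iff.2 (hW.le_ebarE_of_mem hshifted (add_eresE_le p.2 _))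
  · have htx : t ≤ ebarE W t := le_sSup (hdiag t)
    have hsx : s ≤ ebarE W t := zero_le_eresE_iff.1 ((zero_le_eresE_iff.2 htx).trans hts)
    exact hst (htrans _ _ _ (hcone _ _ hsx) (hW.1.ebarE_mem t))
end
end
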